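/- Let N be a binary normal network on X with reticulated cherry {a,b} (reticulation leaf b), and let g_b be the grandparent of b not equal to the parent of a. Then for all c in V_{g_b} and x in X - (V_{g_b} ∪ {a,b}), the rooted triple cx|a is displayed by N if and only if the rooted triple bx|a is displayed by N. -/

import Mathlib

/-- A (candidate) rooted phylogenetic network structure: a directed graph on a
vertex type `V` with a distinguished root and a labelling of (intended) leaves
by elements of `X`.  The combinatorial axioms are imposed by predicates below. -/
structure Network (X : Type) where
  V : Type
  arc : V → V → Prop
  root : V
  leaf : X → V

namespace Network

variable {X : Type} (N : Network X)

def parents (v : N.V) : Set N.V := {u | N.arc u v}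

def children (u : N.V) : Set N.V := {v | N.arc u v}

/-- in-degree 1, out-degree 2 -/
def IsTreeVertex (v : N.V) : Prop := (N.parents v).ncard = 1 ∧ (N.children v).ncard = 2

/-- in-degree 2, out-degree 1 -/
def IsRetic (v : N.V) : Prop := (N.parents v).ncard = 2 ∧ (N.children v).ncard = 1

/-- in-degree 1, out-degree 0 -/
def IsLeafVertex (v : N.V) : Prop := (N.parents v).ncard = 1 ∧ (N.children v).ncard = 0

def Acyclic : Prop := ∀ v : N.V, ¬ Relation.TransGen N.arc v v

/-- A well-formed binary phylogenetic network (non-degenerate case): a finite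
acyclic digraph with a root of in-degree 0 and out-degree 2, leaves of
in-degree 1 and out-degree 0 bijectively labelled by `X`, and all remaining
vertices tree vertices or reticulations. -/
def Wf : Prop :=
  Finite N.V ∧ N.Acyclic ∧
  (N.parents N.root).ncard = 0 ∧ (N.children N.root).ncard = 2 ∧
  Function.Injective N.leaf ∧
  (∀ x : X, N.IsLeafVertex (N.leaf x)) ∧
  (∀ v : N.V, v = N.root ∨ (∃ x, N.leaf x = v) ∨ N.IsTreeVertex v ∨ N.IsRetic v)

/-- The degenerate network on a single leaf: one vertex, no arcs. -/
def Degenerate : Prop :=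
  (∀ v : N.V, v = N.root) ∧ (∀ u v : N.V, ¬ N.arc u v) ∧
  (∃! _x : X, True) ∧ (∀ x : X, N.leaf x = N.root)

def IsBinaryPhylo : Prop := N.Wf ∨ N.Degenerate

/-- `l` is a directed path (a list of successively adjacent vertices) from `u` to `v`. -/
def IsPathFromTo (l : List N.V) (u v : N.V) : Prop :=
  l.Chain' N.arc ∧ l.head? = some u ∧ l.getLast? = some v

/-- `v` is a descendant of `u` (equivalently, `u` is an ancestor of `v`). -/
def Desc (u v : N.V) : Prop := Relation.ReflTransGen N.arc u v

/-- The visibility set of `u`: those leaf labels `x` such that every directed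
path from the root to the leaf labelled `x` traverses `u`. -/
def visSet (u : N.V) : Set X :=
  {x | ∀ l : List N.V, N.IsPathFromTo l N.root (N.leaf x) → u ∈ l}

/-- The cluster set of `u`: leaf labels of leaves that are descendants of `u`. -/
def cluster (u : N.V) : Set X := {x | N.Desc u (N.leaf x)}

/-- A tree path from `u` to `t`: a directed path whose vertices other than the
endpoints are tree vertices. -/
def IsTreePath (l : List N.V) (u t : N.V) : Prop :=
  N.IsPathFromTo l u t ∧ ∀ v ∈ l, v ≠ u → v ≠ t → N.IsTreeVertex v

/-- Tree-child: every vertex with a child has a child that is a tree vertex or a leaf. -/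
def TreeChild : Prop :=
  ∀ v : N.V, (∃ c, N.arc v c) → ∃ c, N.arc v c ∧ (N.IsTreeVertex c ∨ N.IsLeafVertex c)

/-- Some reticulation arc `(u,v)` is a shortcut: there is a directed path from
`u` to `v` avoiding the arc `(u,v)`. -/
def HasShortcut : Prop :=
  ∃ u v, N.arc u v ∧ N.IsRetic v ∧ ∃ w, N.arc u w ∧ w ≠ v ∧ N.Desc w v

/-- Normal: tree-child with no shortcuts. -/
def IsNormal : Prop := N.TreeChild ∧ ¬ N.HasShortcut

def SiblingRetics (u v : N.V) : Prop :=
  u ≠ v ∧ N.IsRetic u ∧ N.IsRetic v ∧ ∃ p, N.arc p u ∧ N.arc p v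

def StackRetics (u v : N.V) : Prop :=
  N.IsRetic u ∧ N.IsRetic v ∧ N.arc u v

/-- `u` and `v` are near-sibling reticulations: some tree vertex `t` has as its
two children `v` and a tree vertex `s` that is a parent of `u`. -/
def NearSiblingRetics (u v : N.V) : Prop :=
  u ≠ v ∧ N.IsRetic u ∧ N.IsRetic v ∧
  ∃ t s, N.IsTreeVertex t ∧ N.IsTreeVertex s ∧ N.arc t s ∧ N.arc t v ∧ N.arc s u

/-- `u` and `v` are near-stack reticulations: the child of `u` is a tree vertex
that is a parent of `v`. -/
def NearStackRetics (u v : N.V) : Prop :=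
  N.IsRetic u ∧ N.IsRetic v ∧ ∃ s, N.arc u s ∧ N.IsTreeVertex s ∧ N.arc s v

def NoNearRetics : Prop :=
  (∀ u v, ¬ N.NearSiblingRetics u v) ∧ (∀ u v, ¬ N.NearStackRetics u v)

/-- `{a,b}` is a cherry: the leaves labelled `a` and `b` share a parent. -/
def Cherry (a b : X) : Prop :=
  a ≠ b ∧ ∃ p, N.arc p (N.leaf a) ∧ N.arc p (N.leaf b)

/-- `{a,b}` is a reticulated cherry with reticulation leaf `b`. -/
def ReticCherry (a b : X) : Prop :=
  a ≠ b ∧ ∃ pa pb, N.arc pa (N.leaf a) ∧ N.arc pb (N.leaf b) ∧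
    N.IsRetic pb ∧ N.arc pa pb

/-- `N` displays the rooted triple `xy|z`: there is a subdigraph of `N` that
is a subdivision of the rooted triple tree with `z` adjacent to the root,
i.e. vertices `p` (the root image) and `q` (the image of the parent of `x,y`)
together with internally disjoint directed paths as below. -/
def Displays (x y z : X) : Prop :=
  x ≠ y ∧ x ≠ z ∧ y ≠ z ∧
  ∃ (p q : N.V) (l0 lx ly lz : List N.V),
    p ≠ q ∧
    N.IsPathFromTo l0 p q ∧
    N.IsPathFromTo lx q (N.leaf x) ∧
    N.IsPathFromTo ly q (N.leaf y) ∧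
    N.IsPathFromTo lz p (N.leaf z) ∧
    (∀ v ∈ lx, v ∈ ly → v = q) ∧
    (∀ v ∈ l0, v ∈ lx ∨ v ∈ ly → v = q) ∧
    (∀ v ∈ lz, v ∈ l0 ∨ v ∈ lx ∨ v ∈ ly → v = p)

/-- `R(N)`: the set of rooted triples displayed by `N`, encoded as ordered
triples `(x, y, z)` standing for `xy|z`. -/
def RDisp : Set (X × X × X) := {t | N.Displays t.1 t.2.1 t.2.2}

/-- Isomorphism of networks on the same leaf set: a digraph isomorphism fixing
each leaf label. -/
def Isomorphic (N1 N2 : Network X) : Prop :=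
  ∃ φ : N1.V ≃ N2.V,
    (∀ u v, N1.arc u v ↔ N2.arc (φ u) (φ v)) ∧ (∀ x, φ (N1.leaf x) = N2.leaf x)

/-- A candidate set for `b` (relative to `a`): a non-empty subset
`W ⊆ X - {a,b}` satisfying conditions (W1)–(W5). -/
def CandidateSet (a b : X) (W : Set X) : Prop :=
  W.Nonempty ∧ a ∉ W ∧ b ∉ W ∧
  -- (W1)
  (∀ c ∈ W, ∀ x : X, x ∉ W → x ≠ b →
    N.Displays b c x ∧ ¬ N.Displays a c b) ∧
  -- (W2)
  (∀ c ∈ W, ∀ c' ∈ W, c ≠ c' → ¬ N.Displays b c c') ∧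
  -- (W3)
  (∀ c ∈ W, ∀ x : X, x ∉ W → x ≠ a → x ≠ b →
    (N.Displays c x a ↔ N.Displays b x a)) ∧
  -- (W4)
  (∀ x y : X, x ∉ W → x ≠ a → x ≠ b → y ∉ W → y ≠ a → y ≠ b →
    N.Displays b x y → ¬ N.Displays a x y → ∀ c ∈ W, N.Displays c x y) ∧
  -- (W5)
  (∀ c ∈ W, (∀ x : X, x ∉ W → x ≠ a → x ≠ b → N.Displays a c x) →
    ∀ x : X, x ∉ W → x ≠ a → x ≠ b → ¬ N.Displays a x c ∧ ¬ N.Displays a x b)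

end Network

/-!
Since `N` has no shortcuts, `g_b` is not an ancestor of `a`, so paths leaving `g_b` downwards
avoid the `a`-path of any embedding of a triple `·x|a`. If `cx|a` is displayed, the root-to-`c`
path through the embedding passes `g_b` as `c ∈ V_{g_b}`; replacing the part of the embedding
below `g_b` towards `c` by `g_b → p_b → b` displays `bx|a`. If `bx|a` is displayed, the path to
`b` enters `p_b` from `g_b`, since entering from `p_a` would put `p_a` on the path to `a` as well;
replacing its part below `g_b` by a path from `g_b` to `c`, cut at its last vertex on the path
to `x`, displays `cx|a`.
-/

theorem List.exists_eq_append_cons_forall_not {α : Type*} {p : α → Prop} {l : List α}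
    (h : ∃ x ∈ l, p x) : ∃ s v t, l = s ++ v :: t ∧ p v ∧ ∀ x ∈ t, ¬ p x := by
  induction l with
  | nil => simp at h
  | cons a l ih =>
    by_cases hl : ∃ x ∈ l, p x
    · obtain ⟨s, v, t, rfl, hv, ht⟩ := ih hl
      exact ⟨a :: s, v, t, rfl, hv, ht⟩
    · exact ⟨[], a, l, rfl, by simpa [hl] using h, fun x hx hpx => hl ⟨x, hx, hpx⟩⟩

theorem List.mem_or_mem_of_mem_append_tail {α : Type*} {a : α} {l₁ l₂ : List α}
    (h : a ∈ l₁ ++ l₂.tail) : a ∈ l₁ ∨ a ∈ l₂ :=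
  (List.mem_append.mp h).imp_right List.mem_of_mem_tail

namespace Network

variable {X : Type} {N : Network X}

section Paths

variable {l l₁ l₂ s t : List N.V} {u v w : N.V}

theorem IsPathFromTo.ne_nil (h : N.IsPathFromTo l u w) : l ≠ [] := by
  rintro rfl
  simpa using h.2.1

theorem IsPathFromTo.head_mem (h : N.IsPathFromTo l u w) : u ∈ l :=
  List.mem_of_mem_head? h.2.1

theorem IsPathFromTo.last_mem (h : N.IsPathFromTo l u w) : w ∈ l :=
  List.mem_of_mem_getLast? h.2.2

theorem IsPathFromTo.head_desc_of_mem (h : N.IsPathFromTo l u w) (hv : v ∈ l) : N.Desc u v :=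
  h.1.induction (N.Desc u) l (fun _ _ hxy hx => hx.tail hxy)
    (fun hl => (List.head_eq_iff_head?_eq_some hl).mpr h.2.1 ▸ .refl) v hv

theorem IsPathFromTo.desc_last_of_mem (h : N.IsPathFromTo l u w) (hv : v ∈ l) : N.Desc v w :=
  h.1.backwards_induction (N.Desc · w) l (fun _ _ hxy hy => hy.head hxy)
    (fun hl => (List.getLast_eq_iff_getLast?_eq_some hl).mpr h.2.2 ▸ .refl) v hv

theorem IsPathFromTo.desc (h : N.IsPathFromTo l u w) : N.Desc u w :=
  h.head_desc_of_mem h.last_mem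

theorem IsPathFromTo.append (h₁ : N.IsPathFromTo l₁ u v) (h₂ : N.IsPathFromTo l₂ v w) :
    N.IsPathFromTo (l₁ ++ l₂.tail) u w := by
  obtain ⟨v', t, rfl⟩ := List.exists_cons_of_ne_nil h₂.ne_nil
  obtain rfl : v' = v := by simpa using h₂.2.1
  obtain ⟨hv, ht⟩ := List.isChain_cons.mp h₂.1
  refine ⟨List.isChain_append.mpr ⟨h₁.1, ht, ?_⟩, ?_, ?_⟩
  · rw [h₁.2.2]
    rintro _ ⟨⟩
    exact hv
  · rw [List.head?_append_of_ne_nil _ h₁.ne_nil, h₁.2.1]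
  · have := h₂.2.2
    rcases t with _ | ⟨y, t⟩
    · simpa [h₁.2.2] using this
    · rw [List.tail_cons, List.getLast?_append_of_ne_nil _ (List.cons_ne_nil _ _)]
      simpa using this

theorem IsPathFromTo.of_append_cons (h : N.IsPathFromTo (s ++ v :: t) u w) :
    N.IsPathFromTo (s ++ [v]) u v ∧ N.IsPathFromTo (v :: t) v w := by
  refine ⟨⟨h.1.infix ⟨[], t, by simp⟩, ?_, by simp⟩,
    ⟨h.1.infix (List.suffix_append s _).isInfix, rfl, ?_⟩⟩
  · rw [← h.2.1]
    cases s <;> rfl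
  · rw [← h.2.2, List.getLast?_append_of_ne_nil _ (List.cons_ne_nil _ _)]

theorem exists_isPathFromTo_of_desc (h : N.Desc u v) : ∃ l, N.IsPathFromTo l u v := by
  obtain ⟨l, hl, hlast⟩ := List.exists_isChain_cons_of_relationReflTransGen h
  exact ⟨u :: l, hl, rfl, by rw [List.getLast?_eq_some_getLast (List.cons_ne_nil _ _), hlast]⟩

theorem IsPathFromTo.exists_arc_of_mem (h : N.IsPathFromTo l u w) (hv : v ∈ l) (hvu : v ≠ u) :
    ∃ t ∈ l, N.arc t v := by
  obtain ⟨s, t, rfl⟩ := List.append_of_mem hv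
  have hs : s ≠ [] := by
    rintro rfl
    exact hvu (by simpa using h.2.1)
  refine ⟨s.getLast hs, by simp [List.getLast_mem hs], ?_⟩
  exact (List.isChain_append.mp h.1).2.2 _ (List.getLast?_eq_some_getLast hs ▸ rfl) _ rfl

end Paths

section Structure

variable {u v w r : N.V} {x y : X}

theorem Acyclic.desc_antisymm (h : N.Acyclic) (huv : N.Desc u v) (hvu : N.Desc v u) : u = v := by
  rcases Relation.reflTransGen_iff_eq_or_transGen.mp huv with rfl | huv
  · rfl
  rcases Relation.reflTransGen_iff_eq_or_transGen.mp hvu with rfl | hvu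
  · rfl
  exact absurd (huv.trans hvu) (h u)

theorem Wf.acyclic (hW : N.Wf) : N.Acyclic := hW.2.1

theorem Wf.leaf_injective (hW : N.Wf) : Function.Injective N.leaf := hW.2.2.2.2.1

theorem Wf.not_arc_leaf (hW : N.Wf) (x : X) (v : N.V) : ¬ N.arc (N.leaf x) v := by
  obtain ⟨hfin, -, -, -, -, hleaf, -⟩ := hW
  have h0 : N.children (N.leaf x) = ∅ := (Set.ncard_eq_zero (Set.toFinite _)).mp (hleaf x).2
  exact fun hv => h0.subset hv

theorem Wf.eq_of_desc_leaf (hW : N.Wf) (h : N.Desc (N.leaf x) v) : v = N.leaf x := by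
  rcases Relation.reflTransGen_iff_eq_or_transGen.mp h with rfl | h
  · rfl
  obtain ⟨w, hw, -⟩ := Relation.TransGen.head'_iff.mp h
  exact absurd hw (hW.not_arc_leaf x w)

theorem Wf.not_desc_leaf_leaf (hW : N.Wf) (hxy : x ≠ y) : ¬ N.Desc (N.leaf x) (N.leaf y) :=
  fun h => hxy (hW.leaf_injective (hW.eq_of_desc_leaf h)).symm

theorem Wf.eq_of_arc_leaf (hW : N.Wf) (hu : N.arc u (N.leaf x)) (hv : N.arc v (N.leaf x)) :
    v = u := by
  obtain ⟨-, -, -, -, -, hleaf, -⟩ := hW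
  obtain ⟨t, ht⟩ := Set.ncard_eq_one.mp (hleaf x).1
  have hu' : u ∈ N.parents (N.leaf x) := hu
  have hv' : v ∈ N.parents (N.leaf x) := hv
  rw [ht, Set.mem_singleton_iff] at hu' hv'
  rw [hu', hv']

theorem Wf.desc_parent_of_desc_leaf (hW : N.Wf) (h : N.Desc u (N.leaf x))
    (hv : N.arc v (N.leaf x)) (hu : N.arc u w) : N.Desc u v := by
  rcases Relation.ReflTransGen.cases_tail h with rfl | ⟨t, hut, ht⟩
  · exact absurd hu (hW.not_arc_leaf x w)
  · exact hW.eq_of_arc_leaf hv ht ▸ hut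

theorem Wf.desc_root (hW : N.Wf) (v : N.V) : N.Desc N.root v := by
  obtain ⟨hfin, hacy, -, -, -, hleaf, hclass⟩ := hW
  have : IsTrans N.V (Relation.TransGen N.arc) := ⟨fun _ _ _ => .trans⟩
  have : Std.Irrefl (Relation.TransGen N.arc) := ⟨hacy⟩
  have hwf : WellFounded (Relation.TransGen N.arc) := Finite.wellFounded_of_trans_of_irrefl _
  induction v using hwf.induction with
  | _ v ih =>
    by_cases hv : v = N.root
    · subst hv
      exact .refl
    have hpar : (N.parents v).ncard ≠ 0 := by
      rcases hclass v with hr | ⟨z, rfl⟩ | ht | hr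
      · exact absurd hr hv
      · simp [(hleaf z).1]
      · simp [ht.1]
      · simp [hr.1]
    obtain ⟨u, hu⟩ := Set.nonempty_of_ncard_ne_zero hpar
    exact (ih u (.single hu)).tail hu

theorem IsRetic.eq_or_eq_of_arc (hr : N.IsRetic r) (hu : N.arc u r) (hv : N.arc v r)
    (huv : u ≠ v) (hw : N.arc w r) : w = u ∨ w = v := by
  have hfin : (N.parents r).Finite := Set.finite_of_ncard_ne_zero (by simp [hr.1])
  have hpar : {u, v} = N.parents r :=
    Set.eq_of_subset_of_ncard_le (Set.pair_subset hu hv) (by rw [hr.1, Set.ncard_pair huv]) hfin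
  have hw' : w ∈ N.parents r := hw
  simpa [← hpar] using hw'

theorem IsRetic.eq_of_arc (hr : N.IsRetic r) (hu : N.arc r u) (hv : N.arc r v) : v = u := by
  obtain ⟨t, ht⟩ := Set.ncard_eq_one.mp hr.2
  have hu' : u ∈ N.children r := hu
  have hv' : v ∈ N.children r := hv
  rw [ht, Set.mem_singleton_iff] at hu' hv'
  rw [hu', hv']

theorem Wf.not_desc_leaf_of_isRetic (hW : N.Wf) (hr : N.IsRetic r) (hrx : N.arc r (N.leaf x))
    (hxy : x ≠ y) : ¬ N.Desc r (N.leaf y) := by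
  intro h
  rcases Relation.reflTransGen_iff_eq_or_transGen.mp h with rfl | h
  · exact hW.not_arc_leaf y _ hrx
  obtain ⟨w, hw, hwy⟩ := Relation.TransGen.head'_iff.mp h
  exact hW.not_desc_leaf_leaf hxy (hr.eq_of_arc hrx hw ▸ hwy)

theorem IsRetic.not_desc_of_arc_of_arc (hr : N.IsRetic r) (hacy : N.Acyclic)
    (hns : ¬ N.HasShortcut) (hu : N.arc u r) (hv : N.arc v r) (huv : u ≠ v) : ¬ N.Desc u v := by
  intro h
  rcases Relation.reflTransGen_iff_eq_or_transGen.mp h with rfl | h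
  · exact huv rfl
  obtain ⟨w, huw, hwv⟩ := Relation.TransGen.head'_iff.mp h
  by_cases hwr : w = r
  · subst hwr
    exact hacy w (.tail' hwv hv)
  · exact hns ⟨u, r, hu, hr, w, huw, hwr, hwv.tail hv⟩

theorem desc_of_mem_visSet (hroot : N.Desc N.root (N.leaf x)) (hx : x ∈ N.visSet u) :
    N.Desc u (N.leaf x) := by
  obtain ⟨l, hl⟩ := exists_isPathFromTo_of_desc hroot
  exact hl.desc_last_of_mem (hx l hl)

end Structure

section Fork

variable {p q g pa pb gb : N.V} {stem branch side : List N.V} {x y z a b c : X}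

/-- `Displays x y z` with the paths from `p` to `q` and from `q` to `y` merged into `stem`. -/
structure IsFork (p q : N.V) (stem branch side : List N.V) (x y z : X) : Prop where
  ne : p ≠ q
  isPath_stem : N.IsPathFromTo stem p (N.leaf y)
  mem_stem : q ∈ stem
  isPath_branch : N.IsPathFromTo branch q (N.leaf x)
  isPath_side : N.IsPathFromTo side p (N.leaf z)
  branch_inter_stem : ∀ v ∈ branch, v ∈ stem → v = q
  side_inter : ∀ v ∈ side, v ∈ stem ∨ v ∈ branch → v = p

theorem Displays.exists_isFork (h : N.Displays x y z) :
    ∃ p q stem branch side, N.IsFork p q stem branch side x y z := by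
  obtain ⟨-, -, -, p, q, l0, lx, ly, lz, hpq, h0, hx, hy, hz, hxy, h0xy, hzall⟩ := h
  refine ⟨p, q, l0 ++ ly.tail, lx, lz,
    ⟨hpq, h0.append hy, List.mem_append_left _ h0.last_mem, hx, hz, ?_, ?_⟩⟩
  · intro v hvx hv
    rcases List.mem_or_mem_of_mem_append_tail hv with hv | hv
    · exact h0xy v hv (.inl hvx)
    · exact hxy v hvx hv
  · intro v hvz hv
    refine hzall v hvz ?_
    rcases hv with hv | hv
    · exact (List.mem_or_mem_of_mem_append_tail hv).imp_right .inr
    · exact .inr (.inl hv)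

theorem IsFork.displays (hacy : N.Acyclic) (hF : N.IsFork p q stem branch side x y z)
    (hxy : x ≠ y) (hxz : x ≠ z) (hyz : y ≠ z) : N.Displays x y z := by
  obtain ⟨s, t, rfl⟩ := List.append_of_mem hF.mem_stem
  obtain ⟨h0, hy⟩ := hF.isPath_stem.of_append_cons
  have h0s : ∀ v ∈ s ++ [q], v ∈ s ++ q :: t := fun v hv => by simp at hv ⊢; tauto
  have hys : ∀ v ∈ q :: t, v ∈ s ++ q :: t := fun v hv => List.mem_append_right s hv
  refine ⟨hxy, hxz, hyz, p, q, s ++ [q], branch, q :: t, side, hF.ne, h0, hF.isPath_branch, hy,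
    hF.isPath_side, fun v hv hv' => hF.branch_inter_stem v hv (hys v hv'), ?_, ?_⟩
  · rintro v hv (hv' | hv')
    · exact hF.branch_inter_stem v hv' (h0s v hv)
    · exact hacy.desc_antisymm (h0.desc_last_of_mem hv) (hy.head_desc_of_mem hv')
  · rintro v hv (hv' | hv' | hv')
    · exact hF.side_inter v hv (.inl (h0s v hv'))
    · exact hF.side_inter v hv (.inr hv')
    · exact hF.side_inter v hv (.inl (hys v hv'))

theorem IsFork.displays_of_desc (hacy : N.Acyclic) (hF : N.IsFork p q stem branch side x y z)
    (hg : g ∈ stem ∨ g ∈ branch) (hgz : ¬ N.Desc g (N.leaf z)) (hgc : N.Desc g (N.leaf c))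
    (hcy : c ≠ y) (hcz : c ≠ z) (hyz : y ≠ z) : N.Displays c y z := by
  obtain ⟨P, hP⟩ := exists_isPathFromTo_of_desc hgc
  have hPside : ∀ v ∈ P, v ∉ side := fun v hv hvs =>
    hgz ((hP.head_desc_of_mem hv).trans (hF.isPath_side.desc_last_of_mem hvs))
  suffices ∃ p' q' stem' branch' side', N.IsFork p' q' stem' branch' side' c y z by
    obtain ⟨_, _, _, _, _, hF'⟩ := this
    exact hF'.displays hacy hcy hcz hyz
  by_cases hmeet : ∃ v ∈ P, v ∈ stem
  · obtain ⟨s, v, t, rfl, hv, ht⟩ := List.exists_eq_append_cons_forall_not hmeet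
    have hvP : ∀ w ∈ v :: t, w ∈ s ++ v :: t := fun w hw => List.mem_append_right s hw
    refine ⟨p, v, stem, v :: t, side, ?_, hF.isPath_stem, hv, hP.of_append_cons.2, hF.isPath_side,
      ?_, ?_⟩
    · rintro rfl
      exact hgz ((hP.head_desc_of_mem (hvP _ List.mem_cons_self)).trans hF.isPath_side.desc)
    · rintro w hw hw'
      rcases List.mem_cons.mp hw with rfl | hw
      · rfl
      · exact absurd hw' (ht w hw)
    · rintro w hw (hw' | hw')
      · exact hF.side_inter w hw (.inl hw')
      · exact absurd hw (hPside w (hvP w hw'))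
  · push Not at hmeet
    obtain ⟨s, t, rfl⟩ := List.append_of_mem (hg.resolve_left (hmeet g hP.head_mem))
    have hmem : ∀ w ∈ s ++ [g] ++ P.tail, w ∈ s ++ g :: t ∨ w ∈ P := fun w hw =>
      (List.mem_or_mem_of_mem_append_tail hw).imp_left fun hw => by simp at hw ⊢; tauto
    refine ⟨p, q, stem, s ++ [g] ++ P.tail, side, hF.ne, hF.isPath_stem, hF.mem_stem,
      hF.isPath_branch.of_append_cons.1.append hP, hF.isPath_side, fun w hw hw' => ?_,
      fun w hw hw' => ?_⟩
    · rcases hmem w hw with hw | hw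
      · exact hF.branch_inter_stem w hw hw'
      · exact absurd hw' (hmeet w hw)
    · rcases hw' with hw' | hw'
      · exact hF.side_inter w hw (.inl hw')
      rcases hmem w hw' with hw' | hw'
      · exact hF.side_inter w hw (.inr hw')
      · exact absurd hw (hPside w hw')

theorem IsFork.mem_of_mem_visSet (hroot : N.Desc N.root p)
    (hF : N.IsFork p q stem branch side x y z) (hx : x ∈ N.visSet g)
    (hgz : ¬ N.Desc g (N.leaf z)) : g ∈ stem ∨ g ∈ branch := by
  obtain ⟨r, hr⟩ := exists_isPathFromTo_of_desc hroot
  obtain ⟨s, t, rfl⟩ := List.append_of_mem hF.mem_stem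
  have hpq := hF.isPath_stem.of_append_cons.1
  rcases List.mem_or_mem_of_mem_append_tail (hx _ ((hr.append hpq).append hF.isPath_branch))
    with hg | hg
  · rcases List.mem_or_mem_of_mem_append_tail hg with hg | hg
    · exact absurd ((hr.desc_last_of_mem hg).trans hF.isPath_side.desc) hgz
    · exact .inl (by simp at hg ⊢; tauto)
  · exact .inr hg

theorem IsFork.mem_branch_of_isRetic (hW : N.Wf) (hF : N.IsFork p q stem branch side b y a)
    (hpa : N.arc pa (N.leaf a)) (hpb : N.arc pb (N.leaf b)) (hr : N.IsRetic pb)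
    (hpapb : N.arc pa pb) (hgbpb : N.arc gb pb) (hgbpa : gb ≠ pa) (hyb : y ≠ b) :
    gb ∈ branch := by
  have hpq : N.Desc p q := hF.isPath_stem.head_desc_of_mem hF.mem_stem
  have hqy : N.Desc q (N.leaf y) := hF.isPath_stem.desc_last_of_mem hF.mem_stem
  have hbq : N.leaf b ≠ q := fun h => hW.not_desc_leaf_leaf hyb.symm (h ▸ hqy)
  have hpbq : pb ≠ q := fun h => hW.not_desc_leaf_of_isRetic hr hpb hyb.symm (h ▸ hqy)
  obtain ⟨u, hu, hub⟩ := hF.isPath_branch.exists_arc_of_mem hF.isPath_branch.last_mem hbq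
  obtain rfl := hW.eq_of_arc_leaf hpb hub
  obtain ⟨w, hw, hwu⟩ := hF.isPath_branch.exists_arc_of_mem hu hpbq
  rcases hr.eq_or_eq_of_arc hpapb hgbpb hgbpa.symm hwu with rfl | rfl
  · -- `pa` would lie on `side` as well (it is the parent of `a`), forcing `pa = p` above `q`
    have hap : N.leaf a ≠ p := by
      rintro rfl
      exact hF.ne (hW.eq_of_desc_leaf hpq).symm
    obtain ⟨v, hv, hva⟩ := hF.isPath_side.exists_arc_of_mem hF.isPath_side.last_mem hap
    obtain rfl := hW.eq_of_arc_leaf hpa hva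
    exact (hF.ne (hW.acyclic.desc_antisymm hpq
      (hF.side_inter _ hv (.inr hw) ▸ hF.isPath_branch.head_desc_of_mem hw))).elim
  · exact hw

end Fork

end Network

/-- Lemma (iv): for a reticulated cherry `{a,b}` with reticulation leaf `b` in
a binary normal network `N`, with `g_b` the grandparent of `b` other than the
parent `p_a` of `a`: for all `c ∈ V_{g_b}` and `x ∈ X - (V_{g_b} ∪ {a,b})`,
`N` displays `cx|a` if and only if `N` displays `bx|a`. -/
theorem vgb_property_iv {X : Type} (N : Network X)
    (h : N.IsBinaryPhylo) (hn : N.IsNormal) (a b : X) (hab : a ≠ b)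
    (pa pb gb : N.V)
    (hpa : N.arc pa (N.leaf a)) (hpb : N.arc pb (N.leaf b))
    (hretic : N.IsRetic pb) (hpapb : N.arc pa pb) (hgbpb : N.arc gb pb)
    (hgbpa : gb ≠ pa) :
    ∀ c ∈ N.visSet gb, ∀ x : X, x ∉ N.visSet gb → x ≠ a → x ≠ b →
      (N.Displays c x a ↔ N.Displays b x a) := by
  have hW : N.Wf := h.resolve_right fun hD => hD.2.1 _ _ hpa
  have hgba : ¬ N.Desc gb (N.leaf a) := fun hd =>
    hretic.not_desc_of_arc_of_arc hW.acyclic hn.2 hgbpb hpapb hgbpa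
      (hW.desc_parent_of_desc_leaf hd hpa hgbpb)
  intro c hc x hx hxa hxb
  have hgbc : N.Desc gb (N.leaf c) := Network.desc_of_mem_visSet (hW.desc_root _) hc
  have hca : c ≠ a := by
    rintro rfl
    exact hgba hgbc
  have hcx : c ≠ x := by
    rintro rfl
    exact hx hc
  constructor
  · intro hd
    obtain ⟨p, q, stem, branch, side, hF⟩ := hd.exists_isFork
    exact hF.displays_of_desc hW.acyclic (hF.mem_of_mem_visSet (hW.desc_root p) hc hgba) hgba
      (.tail (.single hgbpb) hpb) hxb.symm hab.symm hxa
  · intro hd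
    obtain ⟨p, q, stem, branch, side, hF⟩ := hd.exists_isFork
    have hgb := hF.mem_branch_of_isRetic hW hpa hpb hretic hpapb hgbpb hgbpa hxb
    exact hF.displays_of_desc hW.acyclic (.inr hgb) hgba hgbc hcx hca hxa
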